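/- Let g be a finite directed graph with source s, and suppose every vertex reachable from s (other than s) has a unique immediate dominator, forming a dominator tree T rooted at s. For any vertex u ≠ s reachable from s, the set of vertices in the subtree of T rooted at u equals exactly the set of vertices v such that v is reachable from s in g and v is not reachable from s in the induced subgraph on V(g) \ {u}. In particular, the size of the subtree rooted at u equals the decrease in the number of s-reachable vertices caused by deleting u. -/

import Mathlib

/-!
Deleting `u ≠ s` cuts off exactly the vertices that `u` dominates. Domination is transitive,
so it propagates down the edges `idom v → v` of the dominator tree. Conversely, if `u`
dominates `v ≠ u`, then `u` also dominates `idom v`, which occurs strictly before the end of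
every walk to `v`; induction on the length of a walk to `v` then climbs the dominator tree
from `v` up to `u`.
-/

/-- Reachability from `s` in the induced subgraph of the digraph `adj` obtained by
deleting the vertex set `B`. -/
def reachOutside {V : Type*} (adj : V → V → Prop) (B : Set V) (s v : V) : Prop :=
  Relation.ReflTransGen (fun a b => adj a b ∧ a ∉ B ∧ b ∉ B) s v

/-- `p` is a directed walk from `s` to `v` in the digraph `adj`. -/
def IsWalk {V : Type*} (adj : V → V → Prop) (s v : V) (p : List V) : Prop :=
  p.Chain' adj ∧ p.head? = some s ∧ p.getLast? = some v

/-- `u` dominates `v` with respect to the source `s`: every walk from `s` to `v`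
passes through `u`. -/
def Dominates {V : Type*} (adj : V → V → Prop) (s u v : V) : Prop :=
  ∀ p : List V, IsWalk adj s v p → u ∈ p

/-- `u` is the immediate dominator of `v` w.r.t. `s`: `u ≠ v`, `u` dominates `v`, and
every other dominator of `v` (besides `v`) dominates `u`. -/
def ImmDom {V : Type*} (adj : V → V → Prop) (s u v : V) : Prop :=
  u ≠ v ∧ Dominates adj s u v ∧ ∀ w, w ≠ v → Dominates adj s w v → Dominates adj s w u

section Domination

variable {V : Type*} {adj : V → V → Prop} {B : Set V} {s u v a : V} {p : List V}

namespace IsWalk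

lemma ne_nil (hp : IsWalk adj s v p) : p ≠ [] := by
  rintro rfl; cases hp.2.1

lemma head_eq (hp : IsWalk adj s v p) : p.head hp.ne_nil = s := by
  simpa [List.head?_eq_some_head hp.ne_nil] using hp.2.1

lemma getLast_eq (hp : IsWalk adj s v p) : p.getLast hp.ne_nil = v := by
  simpa [List.getLast?_eq_some_getLast hp.ne_nil] using hp.2.2

lemma last_mem (hp : IsWalk adj s v p) : v ∈ p :=
  hp.getLast_eq ▸ List.getLast_mem hp.ne_nil

lemma exists_prefix (hp : IsWalk adj s v p) (ha : a ∈ p) :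
    ∃ q, IsWalk adj s a q ∧ q <+: p ∧ (a ≠ v → q.length < p.length) := by
  obtain ⟨l₁, l₂, rfl⟩ := List.append_of_mem ha
  obtain ⟨hc, hh, hl⟩ := hp
  refine ⟨l₁ ++ [a], ⟨hc.prefix ⟨l₂, by simp⟩, ?_, List.getLast?_concat⟩, ⟨l₂, by simp⟩, ?_⟩
  · cases l₁ <;> simpa using hh
  · intro hav
    cases l₂ with
    | nil => simp_all
    | cons => simp

end IsWalk

lemma reachOutside_iff_exists_isWalk (hs : s ∉ B) :
    reachOutside adj B s v ↔ ∃ p, IsWalk adj s v p ∧ ∀ x ∈ p, x ∉ B := by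
  constructor
  · intro h
    obtain ⟨p, hne, hc, hh, hl⟩ := List.exists_isChain_ne_nil_of_relationReflTransGen h
    refine ⟨p, ⟨hc.imp fun _ _ hab => hab.1, ?_, ?_⟩, ?_⟩
    · simp [List.head?_eq_some_head hne, hh]
    · simp [List.getLast?_eq_some_getLast hne, hl]
    · exact hc.induction (· ∉ B) p (fun _ _ hab _ => hab.2.2) (fun _ => hh ▸ hs)
  · rintro ⟨p, hp, hB⟩
    have hc := hp.1.imp_of_mem_imp (S := fun a b => adj a b ∧ a ∉ B ∧ b ∉ B)
      fun a b ha hb hab => ⟨hab, hB a ha, hB b hb⟩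
    have := List.relationReflTransGen_of_exists_isChain p hc hp.ne_nil
    rwa [hp.head_eq, hp.getLast_eq] at this

lemma reachOutside_mono {C : Set V} (hBC : B ⊆ C) (h : reachOutside adj C s v) :
    reachOutside adj B s v :=
  Relation.ReflTransGen.mono (fun _ _ hab => ⟨hab.1, fun h => hab.2.1 (hBC h),
    fun h => hab.2.2 (hBC h)⟩) _ _ h

lemma reachOutside_empty_of_isWalk (hp : IsWalk adj s v p) : reachOutside adj ∅ s v :=
  (reachOutside_iff_exists_isWalk (Set.notMem_empty s)).2 ⟨p, hp, fun _ _ => Set.notMem_empty _⟩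

lemma Dominates.refl : Dominates adj s v v := fun _ hp => hp.last_mem

lemma Dominates.trans {w : V} (hwa : Dominates adj s w a) (hav : Dominates adj s a v) :
    Dominates adj s w v := fun p hp =>
  have ⟨_, hq, hqp, _⟩ := hp.exists_prefix (hav p hp)
  hqp.subset (hwa _ hq)

lemma not_reachOutside_singleton_iff_dominates (hus : u ≠ s) :
    ¬ reachOutside adj {u} s v ↔ Dominates adj s u v := by
  rw [reachOutside_iff_exists_isWalk (Set.notMem_singleton_iff.2 hus.symm)]
  simp [Dominates]

def domTreeAdj (adj : V → V → Prop) (s : V) (idom : V → V) (a b : V) : Prop :=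
  b ≠ s ∧ reachOutside adj ∅ s b ∧ idom b = a

section DominatorTree

variable {idom : V → V}
  (hidom : ∀ v, v ≠ s → reachOutside adj ∅ s v → ImmDom adj s (idom v) v)
include hidom

lemma Dominates.of_reflTransGen_domTreeAdj
    (h : Relation.ReflTransGen (domTreeAdj adj s idom) u v) : Dominates adj s u v := by
  induction h with
  | refl => exact Dominates.refl
  | tail _ hedge ih =>
    obtain ⟨hbs, hbr, rfl⟩ := hedge
    exact ih.trans (hidom _ hbs hbr).2.1

lemma reflTransGen_domTreeAdj_of_dominates (hu : u ≠ s) (hp : IsWalk adj s v p)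
    (hd : Dominates adj s u v) : Relation.ReflTransGen (domTreeAdj adj s idom) u v := by
  induction hlen : p.length using Nat.strong_induction_on generalizing v p with
  | _ n ih =>
  obtain rfl | huv := eq_or_ne u v
  · exact .refl
  have hvs : v ≠ s := by
    rintro rfl
    exact hu (List.mem_singleton.1 (hd [v] ⟨List.isChain_singleton v, rfl, rfl⟩))
  have hvr := reachOutside_empty_of_isWalk hp
  obtain ⟨hidom_ne, hidom_dom, hidom_least⟩ := hidom v hvs hvr
  obtain ⟨q, hq, -, hlt⟩ := hp.exists_prefix (hidom_dom p hp)
  exact (ih _ (hlen ▸ hlt hidom_ne) hq (hidom_least u huv hd) rfl).tail ⟨hvs, hvr, rfl⟩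

lemma reflTransGen_domTreeAdj_iff (hu : u ≠ s) (hru : reachOutside adj ∅ s u) :
    Relation.ReflTransGen (domTreeAdj adj s idom) u v ↔
      reachOutside adj ∅ s v ∧ Dominates adj s u v := by
  refine ⟨fun h => ⟨?_, .of_reflTransGen_domTreeAdj hidom h⟩, fun ⟨hvr, hd⟩ => ?_⟩
  · rcases h.cases_tail with rfl | ⟨_, _, hedge⟩
    exacts [hru, hedge.2.1]
  · obtain ⟨p, hp, -⟩ := (reachOutside_iff_exists_isWalk (Set.notMem_empty s)).1 hvr
    exact reflTransGen_domTreeAdj_of_dominates hidom hu hp hd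

end DominatorTree

end Domination

/-- if every `s`-reachable vertex `v ≠ s` has a unique immediate dominator
`idom v`, then the subtree of the dominator tree rooted at a reachable `u ≠ s` is
exactly the set of vertices reachable from `s` in `g` that become unreachable when `u`
is deleted; in particular its size equals the decrease in the reachable count. -/
theorem stmt1 {V : Type*} [Fintype V] (adj : V → V → Prop) (s u : V) (idom : V → V)
    (hidom : ∀ v, v ≠ s → reachOutside adj (∅ : Set V) s v →
      ImmDom adj s (idom v) v ∧ ∀ w, ImmDom adj s w v → w = idom v)
    (hu : u ≠ s) (hru : reachOutside adj (∅ : Set V) s u) :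
    {v | Relation.ReflTransGen
          (fun a b => b ≠ s ∧ reachOutside adj (∅ : Set V) s b ∧ idom b = a) u v} =
      {v | reachOutside adj (∅ : Set V) s v ∧ ¬ reachOutside adj ({u} : Set V) s v} ∧
    {v | Relation.ReflTransGen
          (fun a b => b ≠ s ∧ reachOutside adj (∅ : Set V) s b ∧ idom b = a) u v}.ncard =
      {v | reachOutside adj (∅ : Set V) s v}.ncard -
        {v | reachOutside adj ({u} : Set V) s v}.ncard := by
  have hsubtree : {v | Relation.ReflTransGen (domTreeAdj adj s idom) u v} =
      {v | reachOutside adj ∅ s v} \ {v | reachOutside adj {u} s v} := by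
    ext v
    exact (reflTransGen_domTreeAdj_iff (fun v hv hr => (hidom v hv hr).1) hu hru).trans
      (and_congr_right' (not_reachOutside_singleton_iff_dominates hu).symm)
  exact ⟨hsubtree, (congrArg Set.ncard hsubtree).trans
    (Set.ncard_sdiff fun _ => reachOutside_mono (Set.empty_subset _))⟩
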